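/- arXiv:1807.05313 — 7 statements merged into one kernel-verified Lean document; each statement's English description precedes it below -/
import Mathlib

section
/- Let (Z, D, U) be random variables with Z binary (0-1 valued), D binary, and suppose Z is independent of U, and E[D | Z=1, U] − E[D | Z=0, U] = δ almost surely for a constant δ ≠ 0. Let f(z) = P(Z = z) with f(0), f(1) > 0. Then for any bounded measurable function H of a random variable W satisfying W ⟂ (D,Z) | U, one has E[ H(W) · D · (2Z−1) / (f(Z) δ) ] = E[ H(W) · E[D|U] ] · 0 + E[H(W) · (E[D|Z=1,U] − E[D|Z=0,U])/δ ] = E[H(W)] whenever E[D|Z=1,U]−E[D|Z=0,U] = δ; in short E[ H(W)·D·(2Z−1)/(f(Z)δ) ] = E[H(W)]. -/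
/-!
The weight `D (2Z - 1) / f(Z)` equals `w = p⁻¹ 1{Z=1} D - q⁻¹ 1{Z=0} D` with `p = P(Z = 1)`,
`q = P(Z = 0)`; it is a bounded function of `(D, Z)`, so `W ⟂ (D, Z) | U` gives
`E[H(W) w] = E[H(W) E[w | U]]`. Because `Z ⟂ U`, conditioning on `{Z = z}` leaves the law of `U`
unchanged, whence `E[D | Z = z, U] = P(Z = z)⁻¹ E[1{Z=z} D | U]` and `E[w | U] = δ` a.s.
-/

open MeasureTheory ProbabilityTheory

namespace MeasureTheory

variable {Ω : Type*} {m mΩ : MeasurableSpace Ω} {μ : Measure Ω}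

theorem ae_norm_condExp_indicator_le_one (s : Set Ω) :
    ∀ᵐ ω ∂μ, ‖(μ⟦s | m⟧) ω‖ ≤ 1 := by
  have h := ae_bdd_abs_condExp_of_ae_bdd_abs (m := m) (μ := μ)
    (f := s.indicator fun _ ↦ (1 : ℝ)) (R := 1)
    (ae_of_all μ fun ω ↦ by by_cases hω : ω ∈ s <;> simp [hω])
  simpa using h

variable [IsFiniteMeasure μ]

theorem integral_mul_condExp_of_stronglyMeasurable (hm : m ≤ mΩ) {φ f : Ω → ℝ}
    (hφ : StronglyMeasurable[m] φ) {C : ℝ} (hφC : ∀ᵐ ω ∂μ, ‖φ ω‖ ≤ C) (hf : Integrable f μ) :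
    ∫ ω, φ ω * μ[f | m] ω ∂μ = ∫ ω, φ ω * f ω ∂μ :=
  calc ∫ ω, φ ω * μ[f | m] ω ∂μ = ∫ ω, μ[φ * f | m] ω ∂μ :=
        integral_congr_ae (condExp_stronglyMeasurable_mul_of_bound hm hφ hf C hφC).symm
    _ = ∫ ω, φ ω * f ω ∂μ := integral_condExp hm

theorem integral_mul_eq_of_forall_setIntegral_eq (hm : m ≤ mΩ) {f g : Ω → ℝ}
    (hf : Integrable f μ) (hg : Integrable g μ)
    (hfg : ∀ s, MeasurableSet[m] s → ∫ ω in s, f ω ∂μ = ∫ ω in s, g ω ∂μ) {φ : Ω → ℝ}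
    (hφ : StronglyMeasurable[m] φ) {C : ℝ} (hφC : ∀ᵐ ω ∂μ, ‖φ ω‖ ≤ C) :
    ∫ ω, φ ω * f ω ∂μ = ∫ ω, φ ω * g ω ∂μ := by
  have hfg' : μ[f | m] =ᵐ[μ] μ[g | m] :=
    ae_eq_condExp_of_forall_setIntegral_eq hm hg (fun _ _ _ ↦ integrable_condExp.integrableOn)
      (fun s hs _ ↦ by rw [setIntegral_condExp hm hf hs, hfg s hs])
      stronglyMeasurable_condExp.aestronglyMeasurable
  rw [← integral_mul_condExp_of_stronglyMeasurable hm hφ hφC hf,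
    ← integral_mul_condExp_of_stronglyMeasurable hm hφ hφC hg]
  exact integral_congr_ae (by filter_upwards [hfg'] with ω hω; rw [hω])

end MeasureTheory

namespace ProbabilityTheory

section CondIndep

variable {Ω β γ : Type*} {m' mΩ : MeasurableSpace Ω} [StandardBorelSpace Ω] {hm' : m' ≤ mΩ}
  {μ : Measure Ω} [IsFiniteMeasure μ] {mβ : MeasurableSpace β} {mγ : MeasurableSpace γ}
  {X : Ω → β} {Y : Ω → γ}

theorem CondIndepFun.setIntegral_indicator_preimage_eq (hXY : CondIndepFun m' hm' X Y μ)
    (hX : Measurable X) (hY : Measurable Y) {s : Set β} {t : Set γ} (hs : MeasurableSet s)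
    (ht : MeasurableSet t) :
    ∫ ω in X ⁻¹' s, (Y ⁻¹' t).indicator (fun _ ↦ (1 : ℝ)) ω ∂μ
      = ∫ ω in X ⁻¹' s, (μ⟦Y ⁻¹' t | m'⟧) ω ∂μ := by
  have hfac := (condIndepFun_iff_condExp_inter_preimage_eq_mul hX hY).1 hXY s t hs ht
  calc ∫ ω in X ⁻¹' s, (Y ⁻¹' t).indicator (fun _ ↦ (1 : ℝ)) ω ∂μ
      = ∫ ω, (μ⟦X ⁻¹' s ∩ Y ⁻¹' t | m'⟧) ω ∂μ := by
        rw [integral_condExp hm', integral_indicator ((hX hs).inter (hY ht)),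
          setIntegral_indicator (hY ht)]
    _ = ∫ ω, (μ⟦Y ⁻¹' t | m'⟧) ω * (μ⟦X ⁻¹' s | m'⟧) ω ∂μ :=
        integral_congr_ae (by filter_upwards [hfac] with ω hω; rw [hω, mul_comm])
    _ = ∫ ω, (μ⟦Y ⁻¹' t | m'⟧) ω * (X ⁻¹' s).indicator (fun _ ↦ (1 : ℝ)) ω ∂μ :=
        integral_mul_condExp_of_stronglyMeasurable hm' stronglyMeasurable_condExp
          (ae_norm_condExp_indicator_le_one _) ((integrable_const 1).indicator (hX hs))
    _ = ∫ ω in X ⁻¹' s, (μ⟦Y ⁻¹' t | m'⟧) ω ∂μ := by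
        rw [← integral_indicator (hX hs)]
        congr 1 with ω
        by_cases hω : ω ∈ X ⁻¹' s <;> simp [hω]

theorem CondIndepFun.integral_comp_mul_eq_integral_comp_mul_condExp
    (hXY : CondIndepFun m' hm' X Y μ) (hX : Measurable X) (hY : Measurable Y) {f : β → ℝ}
    (hf : Measurable f) {C : ℝ} (hfC : ∀ x, |f x| ≤ C) {g : Ω → ℝ}
    (hg : StronglyMeasurable[mγ.comap Y] g) {C' : ℝ} (hgC : ∀ ω, |g ω| ≤ C') :
    ∫ ω, f (X ω) * g ω ∂μ = ∫ ω, f (X ω) * μ[g | m'] ω ∂μ := by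
  have hg_int : Integrable g μ :=
    .of_bound (hg.mono hY.comap_le).aestronglyMeasurable C' (ae_of_all μ hgC)
  have hgC' : ∀ᵐ ω ∂μ, ‖μ[g | m'] ω‖ ≤ C' := ae_bdd_abs_condExp_of_ae_bdd_abs (ae_of_all μ hgC)
  refine integral_mul_eq_of_forall_setIntegral_eq hX.comap_le hg_int integrable_condExp ?_
    (hf.comp (comap_measurable X)).stronglyMeasurable (ae_of_all μ fun ω ↦ hfC (X ω))
  rintro _ ⟨s, hs, rfl⟩
  have h1X : Integrable ((X ⁻¹' s).indicator fun _ ↦ (1 : ℝ)) μ :=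
    (integrable_const 1).indicator (hX hs)
  calc ∫ ω in X ⁻¹' s, g ω ∂μ
      = ∫ ω, g ω * (X ⁻¹' s).indicator (fun _ ↦ (1 : ℝ)) ω ∂μ := by
        rw [← integral_indicator (hX hs)]
        congr 1 with ω
        by_cases hω : ω ∈ X ⁻¹' s <;> simp [hω]
    _ = ∫ ω, g ω * (μ⟦X ⁻¹' s | m'⟧) ω ∂μ := by
        refine integral_mul_eq_of_forall_setIntegral_eq hY.comap_le h1X integrable_condExp ?_ hg
          (ae_of_all μ hgC)
        rintro _ ⟨t, ht, rfl⟩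
        exact hXY.symm.setIntegral_indicator_preimage_eq hY hX ht hs
    _ = ∫ ω, μ[g | m'] ω * (μ⟦X ⁻¹' s | m'⟧) ω ∂μ := by
        simp only [mul_comm _ ((μ⟦X ⁻¹' s | m'⟧) _)]
        exact (integral_mul_condExp_of_stronglyMeasurable hm' stronglyMeasurable_condExp
          (ae_norm_condExp_indicator_le_one _) hg_int).symm
    _ = ∫ ω in X ⁻¹' s, μ[g | m'] ω ∂μ := by
        rw [integral_mul_condExp_of_stronglyMeasurable hm' stronglyMeasurable_condExp hgC' h1X,
          ← integral_indicator (hX hs)]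
        congr 1 with ω
        by_cases hω : ω ∈ X ⁻¹' s <;> simp [hω]

end CondIndep

section IndepEvent

variable {Ω : Type*} {m mΩ : MeasurableSpace Ω} {μ : Measure Ω} [IsFiniteMeasure μ] {S : Set Ω}

theorem trim_cond_eq_trim_of_indep (hm : m ≤ mΩ) (hS : MeasurableSet S) (hμS : μ S ≠ 0)
    (hindep : ∀ s, MeasurableSet[m] s → μ (S ∩ s) = μ S * μ s) :
    μ[|S].trim hm = μ.trim hm := by
  refine @Measure.ext Ω m _ _ fun s hs ↦ ?_
  rw [trim_measurableSet_eq hm hs, trim_measurableSet_eq hm hs, cond_apply hS, hindep s hs,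
    ← mul_assoc, ENNReal.inv_mul_cancel hμS (measure_ne_top μ S), one_mul]

theorem condExp_cond_ae_eq_of_indep (hm : m ≤ mΩ) (hS : MeasurableSet S) (hμS : μ S ≠ 0)
    (hindep : ∀ s, MeasurableSet[m] s → μ (S ∩ s) = μ S * μ s) {f : Ω → ℝ}
    (hf : Integrable f μ) :
    μ[|S][f | m] =ᵐ[μ] (μ.real S)⁻¹ • μ[S.indicator f | m] := by
  have htrim := trim_cond_eq_trim_of_indep hm hS hμS hindep
  have hμS' : μ.real S ≠ 0 := (measureReal_ne_zero_iff (measure_ne_top μ S)).2 hμS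
  have hf_cond : Integrable f μ[|S] :=
    hf.restrict.smul_measure (ENNReal.inv_ne_top.2 hμS)
  set g := μ[|S][f | m]
  have hgm : StronglyMeasurable[m] g := stronglyMeasurable_condExp
  have hg : Integrable g μ :=
    integrable_of_integrable_trim hm (htrim ▸ integrable_condExp.trim hm hgm)
  have hsame : ∀ s, MeasurableSet[m] s → ∫ ω in s, g ω ∂μ[|S] = ∫ ω in s, g ω ∂μ := by
    intro s hs
    rw [← integral_indicator (hm s hs), ← integral_indicator (hm s hs),
      integral_trim hm (hgm.indicator hs), integral_trim hm (hgm.indicator hs), htrim]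
  have hversion : (fun ω ↦ μ.real S * g ω) =ᵐ[μ] μ[S.indicator f | m] := by
    refine ae_eq_condExp_of_forall_setIntegral_eq hm (hf.indicator hS)
      (fun _ _ _ ↦ (hg.const_mul _).integrableOn) (fun s hs _ ↦ ?_)
      (stronglyMeasurable_const.mul hgm).aestronglyMeasurable
    rw [integral_const_mul, ← hsame s hs, setIntegral_condExp hm hf_cond hs,
      setIntegral_indicator hS, cond, Measure.restrict_smul, integral_smul_measure,
      Measure.restrict_restrict (hm s hs), ENNReal.toReal_inv, smul_eq_mul, ← measureReal_def,
      ← mul_assoc, mul_inv_cancel₀ hμS', one_mul]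
  filter_upwards [hversion] with ω hω
  rw [Pi.smul_apply, ← hω, smul_eq_mul, inv_mul_cancel_left₀ hμS']

end IndepEvent

end ProbabilityTheory

noncomputable def instrumentWeight {Ω : Type*} [MeasurableSpace Ω] (μ : Measure Ω)
    (Z D : Ω → ℝ) : Ω → ℝ :=
  (μ.real {ω | Z ω = 1})⁻¹ • {ω | Z ω = 1}.indicator D
    - (μ.real {ω | Z ω = 0})⁻¹ • {ω | Z ω = 0}.indicator D

section InstrumentWeight

variable {Ω κ : Type*} {mΩ : MeasurableSpace Ω} {mκ : MeasurableSpace κ} {μ : Measure Ω}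
  {Z D : Ω → ℝ}

theorem instrumentWeight_apply (hZ01 : ∀ ω, Z ω = 0 ∨ Z ω = 1) (ω : Ω) :
    instrumentWeight μ Z D ω = D ω * (2 * Z ω - 1) / (μ {ω' | Z ω' = Z ω}).toReal := by
  rcases hZ01 ω with h | h <;> simp [instrumentWeight, h, measureReal_def] <;> ring

theorem abs_instrumentWeight_le (hD01 : ∀ ω, D ω = 0 ∨ D ω = 1) (ω : Ω) :
    |instrumentWeight μ Z D ω| ≤ (μ.real {ω | Z ω = 1})⁻¹ + (μ.real {ω | Z ω = 0})⁻¹ := by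
  have h1 := inv_nonneg.2 (measureReal_nonneg (μ := μ) (s := {ω | Z ω = 1}))
  have h0 := inv_nonneg.2 (measureReal_nonneg (μ := μ) (s := {ω | Z ω = 0}))
  by_cases hz1 : Z ω = 1 <;> by_cases hz0 : Z ω = 0 <;> rcases hD01 ω with hd | hd <;>
    simp [instrumentWeight, hz1, hz0, hd, abs_of_nonneg measureReal_nonneg] <;> linarith

theorem stronglyMeasurable_comap_instrumentWeight :
    StronglyMeasurable[MeasurableSpace.comap (fun ω ↦ (D ω, Z ω)) inferInstance]
      (instrumentWeight μ Z D) := by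
  have hD : Measurable[MeasurableSpace.comap (fun ω ↦ (D ω, Z ω)) inferInstance] D :=
    measurable_fst.comp (comap_measurable _)
  have hZ : Measurable[MeasurableSpace.comap (fun ω ↦ (D ω, Z ω)) inferInstance] Z :=
    measurable_snd.comp (comap_measurable _)
  exact (((hD.indicator (hZ (measurableSet_singleton 1))).const_smul _).sub
    ((hD.indicator (hZ (measurableSet_singleton 0))).const_smul _)).stronglyMeasurable

theorem condExp_instrumentWeight_ae_eq [IsFiniteMeasure μ] {U : Ω → κ} (hZ : Measurable Z)
    (hU : Measurable U) (hindep : IndepFun Z U μ) (hD : Integrable D μ)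
    (hμ1 : μ {ω | Z ω = 1} ≠ 0) (hμ0 : μ {ω | Z ω = 0} ≠ 0) :
    μ[instrumentWeight μ Z D | mκ.comap U] =ᵐ[μ]
      μ[|{ω | Z ω = 1}][D | mκ.comap U] - μ[|{ω | Z ω = 0}][D | mκ.comap U] := by
  have hcond : ∀ z, μ {ω | Z ω = z} ≠ 0 → μ[|{ω | Z ω = z}][D | mκ.comap U] =ᵐ[μ]
      (μ.real {ω | Z ω = z})⁻¹ • μ[{ω | Z ω = z}.indicator D | mκ.comap U] := by
    refine fun z hz ↦ condExp_cond_ae_eq_of_indep hU.comap_le (hZ (measurableSet_singleton z))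
      hz ?_ hD
    rintro _ ⟨B, hB, rfl⟩
    exact hindep.measure_inter_preimage_eq_mul _ _ (measurableSet_singleton z) hB
  have hint : ∀ z, Integrable ({ω | Z ω = z}.indicator D) μ :=
    fun z ↦ hD.indicator (hZ (measurableSet_singleton z))
  refine (condExp_sub ((hint 1).smul _) ((hint 0).smul _) _).trans ?_
  exact ((condExp_smul _ _ _).sub (condExp_smul _ _ _)).trans
    ((hcond 1 hμ1).sub (hcond 0 hμ0)).symm

end InstrumentWeight

/-- Core weighting identity (S1): under Z ⟂ U, W ⟂ (D,Z) | U and the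
no-interaction condition E[D|Z=1,U] − E[D|Z=0,U] = δ ≠ 0 a.s., for any bounded
measurable H one has E[H(W)·D·(2Z−1)/(f(Z)δ)] = E[H(W)]. -/
theorem weighting_identity_treated
    {Ω : Type*} [MeasurableSpace Ω] [StandardBorelSpace Ω]
    (μ : Measure Ω) [IsProbabilityMeasure μ]
    (Z D U W : Ω → ℝ) (H : ℝ → ℝ) (δ : ℝ)
    (hZ : Measurable Z) (hD : Measurable D) (hU : Measurable U) (hW : Measurable W)
    (hHmeas : Measurable H) (hHbdd : ∃ C, ∀ x, |H x| ≤ C)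
    (hZ01 : ∀ ω, Z ω = 0 ∨ Z ω = 1)
    (hD01 : ∀ ω, D ω = 0 ∨ D ω = 1)
    (hZpos : 0 < μ {ω | Z ω = 1}) (hZlt : μ {ω | Z ω = 1} < 1)
    (hindep : IndepFun Z U μ)
    (hci : CondIndepFun (MeasurableSpace.comap U inferInstance) hU.comap_le
      W (fun ω => (D ω, Z ω)) μ)
    (hδ : δ ≠ 0)
    (hdiff : ∀ᵐ ω ∂μ,
      MeasureTheory.condExp (MeasurableSpace.comap U inferInstance)
        (ProbabilityTheory.cond μ {ω' | Z ω' = 1}) D ω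
      - MeasureTheory.condExp (MeasurableSpace.comap U inferInstance)
        (ProbabilityTheory.cond μ {ω' | Z ω' = 0}) D ω = δ) :
    ∫ ω, H (W ω) * D ω * (2 * Z ω - 1) /
        ((μ {ω' | Z ω' = Z ω}).toReal * δ) ∂μ
      = ∫ ω, H (W ω) ∂μ := by
  obtain ⟨C, hC⟩ := hHbdd
  have hμ0 : μ {ω | Z ω = 0} ≠ 0 := by
    have h01 : {ω | Z ω = 0} = {ω | Z ω = 1}ᶜ := by
      ext ω; rcases hZ01 ω with h | h <;> simp [h]
    rw [h01, Ne, prob_compl_eq_zero_iff (s := {ω | Z ω = 1}) (hZ (measurableSet_singleton 1))]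
    exact hZlt.ne
  have hD_int : Integrable D μ := .of_bound hD.aestronglyMeasurable 1
    (ae_of_all μ fun ω ↦ by rcases hD01 ω with h | h <;> simp [h])
  have hweight : μ[instrumentWeight μ Z D | MeasurableSpace.comap U inferInstance] =ᵐ[μ]
      fun _ ↦ δ := by
    filter_upwards [condExp_instrumentWeight_ae_eq hZ hU hindep hD_int hZpos.ne' hμ0, hdiff]
      with ω hω hδω
    rw [hω, Pi.sub_apply, hδω]
  calc ∫ ω, H (W ω) * D ω * (2 * Z ω - 1) / ((μ {ω' | Z ω' = Z ω}).toReal * δ) ∂μ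
      = δ⁻¹ * ∫ ω, H (W ω) * instrumentWeight μ Z D ω ∂μ := by
        rw [← integral_const_mul]
        congr 1 with ω
        rw [instrumentWeight_apply hZ01]
        ring
    _ = δ⁻¹ * ∫ ω, H (W ω) *
          μ[instrumentWeight μ Z D | MeasurableSpace.comap U inferInstance] ω ∂μ := by
        rw [hci.integral_comp_mul_eq_integral_comp_mul_condExp hW (hD.prodMk hZ) hHmeas hC
          stronglyMeasurable_comap_instrumentWeight (abs_instrumentWeight_le hD01)]
    _ = δ⁻¹ * ∫ ω, H (W ω) * δ ∂μ := by
        congr 1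
        exact integral_congr_ae (by filter_upwards [hweight] with ω hω; rw [hω])
    _ = ∫ ω, H (W ω) ∂μ := by
        rw [integral_mul_const, mul_comm, mul_assoc, mul_inv_cancel₀ hδ, mul_one]
end

section
/- Under the same setup, for any bounded measurable function H of W with W ⟂ (D,Z) | U, Z ⟂ U, E[D|Z=1,U] − E[D|Z=0,U] = δ ≠ 0 constant, and 0 < P(Z=1) < 1, one has E[ H(W) · (1−D) · (2Z−1) / (f(Z) δ) ] = −E[H(W)], where f(z) = P(Z=z). -/
/-!
Write `h = H ∘ W`, `k = E[h | U]` and, for `z ∈ {0, 1}`, `g_z = E[D | U]` under `P(· | Z = z)`.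
Since `W ⟂ (D, Z) | U`, the law of `W` on an event `{(D, Z) ∈ t}` has density
`P((D, Z) ∈ t | U)`, so `h` may be replaced by `k` when integrating over such events.
Since `Z ⟂ U`, the measures `P(· | Z = z)` and `P` agree on `σ(U)`. Together,
`E[h (1 - D); Z = z] = E[k (1 - D); Z = z] = f(z) (E h - E[k g_z])`,
and the weighted difference of the two strata is `(E[k g_0] - E[k g_1]) / δ = -E k = -E h`.
-/

open MeasureTheory ProbabilityTheory

section

variable {Ω : Type*} {m mΩ : MeasurableSpace Ω} {μ : Measure Ω}

theorem integral_mul_condExp_of_stronglyMeasurable [IsFiniteMeasure μ] (hm : m ≤ mΩ)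
    {f g : Ω → ℝ} (hg : StronglyMeasurable[m] g) (hf : Integrable f μ)
    (hgf : Integrable (g * f) μ) :
    ∫ ω, g ω * μ[f|m] ω ∂μ = ∫ ω, g ω * f ω ∂μ :=
  calc ∫ ω, g ω * μ[f|m] ω ∂μ = ∫ ω, μ[g * f|m] ω ∂μ :=
        integral_congr_ae (condExp_mul_of_stronglyMeasurable_left hg hgf hf).symm
    _ = ∫ ω, g ω * f ω ∂μ := integral_condExp hm

theorem condExp_indicator_one_nonneg (s : Set Ω) : 0 ≤ᵐ[μ] (μ⟦s | m⟧) :=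
  condExp_nonneg (ae_of_all _ (Set.indicator_nonneg fun _ _ => zero_le_one))

theorem abs_condExp_indicator_one_le (s : Set Ω) : ∀ᵐ ω ∂μ, |(μ⟦s | m⟧) ω| ≤ 1 :=
  ae_bdd_abs_condExp_of_ae_bdd_abs (ae_of_all _ fun ω => by
    by_cases hω : ω ∈ s <;> simp [hω])

theorem MeasureTheory.Integrable.cond {S : Set Ω} {f : Ω → ℝ} (hf : Integrable f μ)
    (hμS : μ S ≠ 0) :
    Integrable f μ[|S] :=
  hf.restrict.smul_measure (ENNReal.inv_ne_top.2 hμS)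

theorem setIntegral_eq_measureReal_mul_integral_cond [IsFiniteMeasure μ] {S : Set Ω}
    (hμS : μ S ≠ 0) (f : Ω → ℝ) :
    ∫ ω in S, f ω ∂μ = μ.real S * ∫ ω, f ω ∂μ[|S] := by
  rw [ProbabilityTheory.cond, integral_smul_measure, ENNReal.toReal_inv, smul_eq_mul, ← mul_assoc,
    measureReal_def, mul_inv_cancel₀ (ENNReal.toReal_ne_zero.2 ⟨hμS, measure_ne_top μ S⟩),
    one_mul]

variable {m₁ : MeasurableSpace Ω} [IsFiniteMeasure μ] {S : Set Ω}

theorem cond_trim_eq_trim_of_indep (hm : m ≤ mΩ) (hm₁ : m₁ ≤ mΩ) (hind : Indep m₁ m μ)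
    (hS : MeasurableSet[m₁] S) (hμS : μ S ≠ 0) : μ[|S].trim hm = μ.trim hm := by
  refine @Measure.ext _ m _ _ fun A hA => ?_
  rw [trim_measurableSet_eq hm hA, trim_measurableSet_eq hm hA, cond_apply (hm₁ S hS),
    (Indep_iff _ _ _).1 hind S A hS hA, ← mul_assoc,
    ENNReal.inv_mul_cancel hμS (measure_ne_top μ S), one_mul]

theorem integral_cond_of_indep (hm : m ≤ mΩ) (hm₁ : m₁ ≤ mΩ) (hind : Indep m₁ m μ)
    (hS : MeasurableSet[m₁] S) (hμS : μ S ≠ 0) {f : Ω → ℝ} (hf : StronglyMeasurable[m] f) :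
    ∫ ω, f ω ∂μ[|S] = ∫ ω, f ω ∂μ := by
  rw [integral_trim hm hf, integral_trim hm hf, cond_trim_eq_trim_of_indep hm hm₁ hind hS hμS]

theorem MeasureTheory.Integrable.of_cond_of_indep (hm : m ≤ mΩ) (hm₁ : m₁ ≤ mΩ)
    (hind : Indep m₁ m μ) (hS : MeasurableSet[m₁] S) (hμS : μ S ≠ 0) {f : Ω → ℝ}
    (hf : StronglyMeasurable[m] f)
    (hfi : Integrable f μ[|S]) : Integrable f μ := by
  refine integrable_of_integrable_trim hm ?_
  rw [← cond_trim_eq_trim_of_indep hm hm₁ hind hS hμS]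
  exact hfi.trim hm hf

theorem setIntegral_eq_measureReal_mul_integral_of_indep (hm : m ≤ mΩ) (hm₁ : m₁ ≤ mΩ)
    (hind : Indep m₁ m μ) (hS : MeasurableSet[m₁] S) {f : Ω → ℝ} (hf : StronglyMeasurable[m] f) :
    ∫ ω in S, f ω ∂μ = μ.real S * ∫ ω, f ω ∂μ := by
  rcases eq_or_ne (μ S) 0 with hμS | hμS
  · simp [Measure.restrict_eq_zero.2 hμS, measureReal_def, hμS]
  rw [setIntegral_eq_measureReal_mul_integral_cond hμS,
    integral_cond_of_indep hm hm₁ hind hS hμS hf]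

theorem setIntegral_mul_eq_integral_mul_condExp_cond (hm : m ≤ mΩ) (hm₁ : m₁ ≤ mΩ)
    (hind : Indep m₁ m μ) (hS : MeasurableSet[m₁] S) (hμS : μ S ≠ 0) {k f : Ω → ℝ}
    (hk : StronglyMeasurable[m] k) (hf : Integrable f μ) (hkf : Integrable (k * f) μ) :
    ∫ ω in S, k ω * f ω ∂μ = μ.real S * ∫ ω, k ω * μ[|S][f|m] ω ∂μ := by
  rw [setIntegral_eq_measureReal_mul_integral_cond hμS,
    ← integral_mul_condExp_of_stronglyMeasurable hm hk (hf.cond hμS) (hkf.cond hμS),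
    integral_cond_of_indep hm hm₁ hind hS hμS (f := fun ω => k ω * μ[|S][f|m] ω)
      (hk.mul stronglyMeasurable_condExp)]

theorem integrable_mul_condExp_cond (hm : m ≤ mΩ) (hm₁ : m₁ ≤ mΩ)
    (hind : Indep m₁ m μ) (hS : MeasurableSet[m₁] S) (hμS : μ S ≠ 0) {k f : Ω → ℝ}
    (hk : StronglyMeasurable[m] k) (hf : Integrable f μ) (hkf : Integrable (k * f) μ) :
    Integrable (fun ω => k ω * μ[|S][f|m] ω) μ :=
  (integrable_condExp.congr
    (condExp_mul_of_stronglyMeasurable_left hk (hkf.cond hμS) (hf.cond hμS))).of_cond_of_indep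
    hm hm₁ hind hS hμS (hk.mul stronglyMeasurable_condExp)

theorem integral_mul_condExp_cond_sub_eq_of_indep (hm : m ≤ mΩ) (hm₁ : m₁ ≤ mΩ)
    (hind : Indep m₁ m μ) {S₁ S₀ : Set Ω} (hS₁ : MeasurableSet[m₁] S₁)
    (hS₀ : MeasurableSet[m₁] S₀) (hμS₁ : μ S₁ ≠ 0) (hμS₀ : μ S₀ ≠ 0) {k f : Ω → ℝ}
    (hk : StronglyMeasurable[m] k) (hf : Integrable f μ) (hkf : Integrable (k * f) μ) {δ : ℝ}
    (hδ : ∀ᵐ ω ∂μ, μ[|S₁][f|m] ω - μ[|S₀][f|m] ω = δ) :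
    ∫ ω, k ω * μ[|S₁][f|m] ω ∂μ - ∫ ω, k ω * μ[|S₀][f|m] ω ∂μ = δ * ∫ ω, k ω ∂μ := by
  rw [← integral_sub (integrable_mul_condExp_cond hm hm₁ hind hS₁ hμS₁ hk hf hkf)
    (integrable_mul_condExp_cond hm hm₁ hind hS₀ hμS₀ hk hf hkf), ← integral_const_mul]
  refine integral_congr_ae ?_
  filter_upwards [hδ] with ω hω
  rw [← mul_sub, hω, mul_comm]

end

section

variable {Ω β γ : Type*} {m mΩ : MeasurableSpace Ω} [StandardBorelSpace Ω] {μ : Measure Ω}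
  [IsFiniteMeasure μ] {mβ : MeasurableSpace β} {mγ : MeasurableSpace γ} {hm : m ≤ mΩ}
  {W : Ω → β} {V : Ω → γ} {t : Set γ}

theorem ProbabilityTheory.CondIndepFun.measureReal_inter_preimage
    (hci : CondIndepFun m hm W V μ) (hW : Measurable W) (hV : Measurable V) {s : Set β}
    (hs : MeasurableSet s) (ht : MeasurableSet t) :
    μ.real (W ⁻¹' s ∩ V ⁻¹' t) = ∫ ω in W ⁻¹' s, (μ⟦V ⁻¹' t | m⟧) ω ∂μ := by
  have hfac := (condIndepFun_iff_condExp_inter_preimage_eq_mul hW hV).1 hci s t hs ht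
  have hind : Integrable ((W ⁻¹' s).indicator fun _ => (1 : ℝ)) μ :=
    (integrable_const 1).indicator (hW hs)
  calc μ.real (W ⁻¹' s ∩ V ⁻¹' t) = ∫ ω, (μ⟦W ⁻¹' s ∩ V ⁻¹' t | m⟧) ω ∂μ := by
        rw [integral_condExp hm, ← integral_indicator_one ((hW hs).inter (hV ht))]; rfl
    _ = ∫ ω, (μ⟦V ⁻¹' t | m⟧) ω * (μ⟦W ⁻¹' s | m⟧) ω ∂μ := by
        refine integral_congr_ae ?_
        filter_upwards [hfac] with ω hω
        rw [hω, mul_comm]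
    _ = ∫ ω, (μ⟦V ⁻¹' t | m⟧) ω * (W ⁻¹' s).indicator (fun _ => (1 : ℝ)) ω ∂μ :=
        integral_mul_condExp_of_stronglyMeasurable hm stronglyMeasurable_condExp hind
          (hind.bdd_mul integrable_condExp.aestronglyMeasurable
            (abs_condExp_indicator_one_le _))
    _ = ∫ ω in W ⁻¹' s, (μ⟦V ⁻¹' t | m⟧) ω ∂μ := by
        rw [← integral_indicator (hW hs)]
        congr with ω
        by_cases hω : ω ∈ W ⁻¹' s <;> simp [hω]

theorem ProbabilityTheory.CondIndepFun.map_restrict_preimage_eq_map_withDensity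
    (hci : CondIndepFun m hm W V μ) (hW : Measurable W) (hV : Measurable V)
    (ht : MeasurableSet t) :
    (μ.restrict (V ⁻¹' t)).map W
      = (μ.withDensity fun ω => ENNReal.ofReal ((μ⟦V ⁻¹' t | m⟧) ω)).map W := by
  ext s hs
  rw [Measure.map_apply hW hs, Measure.map_apply hW hs, Measure.restrict_apply (hW hs),
    withDensity_apply _ (hW hs), ← ofReal_integral_eq_lintegral_ofReal
      integrable_condExp.integrableOn (ae_restrict_of_ae (condExp_indicator_one_nonneg _)),
    ← hci.measureReal_inter_preimage hW hV hs ht, ofReal_measureReal]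

theorem ProbabilityTheory.CondIndepFun.setIntegral_preimage_eq_setIntegral_condExp
    (hci : CondIndepFun m hm W V μ) (hW : Measurable W) (hV : Measurable V)
    {H : β → ℝ} (hH : Measurable H) (hHW : Integrable (fun ω => H (W ω)) μ)
    (ht : MeasurableSet t) :
    ∫ ω in V ⁻¹' t, H (W ω) ∂μ = ∫ ω in V ⁻¹' t, μ[fun ω => H (W ω)|m] ω ∂μ := by
  set Y := (μ⟦V ⁻¹' t | m⟧)
  have hYm : StronglyMeasurable[m] Y := stronglyMeasurable_condExp
  have hind : Integrable ((V ⁻¹' t).indicator fun _ => (1 : ℝ)) μ :=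
    (integrable_const 1).indicator (hV ht)
  calc ∫ ω in V ⁻¹' t, H (W ω) ∂μ = ∫ x, H x ∂(μ.restrict (V ⁻¹' t)).map W :=
        (integral_map hW.aemeasurable hH.aestronglyMeasurable).symm
    _ = ∫ x, H x ∂(μ.withDensity fun ω => ENNReal.ofReal (Y ω)).map W := by
        rw [hci.map_restrict_preimage_eq_map_withDensity hW hV ht]
    _ = ∫ ω, H (W ω) ∂(μ.withDensity fun ω => ENNReal.ofReal (Y ω)) :=
        integral_map hW.aemeasurable hH.aestronglyMeasurable
    _ = ∫ ω, Y ω * H (W ω) ∂μ := by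
        rw [integral_withDensity_eq_integral_toReal_smul
          (hYm.mono hm).measurable.ennreal_ofReal (ae_of_all _ fun _ => ENNReal.ofReal_lt_top)]
        refine integral_congr_ae ?_
        filter_upwards [condExp_indicator_one_nonneg (μ := μ) (m := m) (V ⁻¹' t)] with ω hω
        simp [Y, ENNReal.toReal_ofReal hω]
    _ = ∫ ω, Y ω * μ[fun ω => H (W ω)|m] ω ∂μ :=
        (integral_mul_condExp_of_stronglyMeasurable hm hYm hHW
          (hHW.bdd_mul integrable_condExp.aestronglyMeasurable
            (abs_condExp_indicator_one_le _))).symm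
    _ = ∫ ω, μ[fun ω => H (W ω)|m] ω * (V ⁻¹' t).indicator (fun _ => (1 : ℝ)) ω ∂μ := by
        simp_rw [mul_comm (Y _)]
        exact integral_mul_condExp_of_stronglyMeasurable hm stronglyMeasurable_condExp hind
          (integrable_condExp.mul_bdd hind.aestronglyMeasurable
            (ae_of_all _ fun _ => (norm_indicator_le_norm_self _ _).trans_eq norm_one))
    _ = ∫ ω in V ⁻¹' t, μ[fun ω => H (W ω)|m] ω ∂μ := by
        rw [← integral_indicator (hV ht)]
        congr with ω
        by_cases hω : ω ∈ V ⁻¹' t <;> simp [hω]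

end

section

variable {Ω α β : Type*} {m mΩ : MeasurableSpace Ω} {μ : Measure Ω} {mα : MeasurableSpace α}
  [MeasurableSingletonClass α] {mβ : MeasurableSpace β}

theorem integral_mul_two_mul_sub_one_div_eq {Z : Ω → ℝ} (hZ : Measurable Z)
    (hZ01 : ∀ ω, Z ω = 0 ∨ Z ω = 1) {f : Ω → ℝ} (hf : Integrable f μ) (δ : ℝ) :
    ∫ ω, f ω * (2 * Z ω - 1) / ((μ {ω' | Z ω' = Z ω}).toReal * δ) ∂μ
      = (μ.real {ω | Z ω = 1} * δ)⁻¹ * ∫ ω in {ω | Z ω = 1}, f ω ∂μ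
        - (μ.real {ω | Z ω = 0} * δ)⁻¹ * ∫ ω in {ω | Z ω = 0}, f ω ∂μ := by
  have hS : ∀ z : ℝ, MeasurableSet {ω | Z ω = z} := fun z => hZ (measurableSet_singleton z)
  have hpt : ∀ ω, f ω * (2 * Z ω - 1) / ((μ {ω' | Z ω' = Z ω}).toReal * δ)
      = {ω | Z ω = 1}.indicator (fun ω => (μ.real {ω | Z ω = 1} * δ)⁻¹ * f ω) ω
        - {ω | Z ω = 0}.indicator (fun ω => (μ.real {ω | Z ω = 0} * δ)⁻¹ * f ω) ω := by
    intro ω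
    rcases hZ01 ω with h | h <;> norm_num [h, measureReal_def, div_eq_inv_mul, mul_comm]
  rw [integral_congr_ae (ae_of_all _ hpt), integral_sub ((hf.const_mul _).indicator (hS 1))
    ((hf.const_mul _).indicator (hS 0)), integral_indicator (hS 1), integral_indicator (hS 0),
    integral_const_mul, integral_const_mul]

theorem setIntegral_mul_one_sub_eq_setIntegral_preimage {Z : Ω → α} {D : Ω → ℝ}
    (hD : Measurable D) (hD01 : ∀ ω, D ω = 0 ∨ D ω = 1) (f : Ω → ℝ) (z : α) :
    ∫ ω in {ω | Z ω = z}, f ω * (1 - D ω) ∂μ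
      = ∫ ω in (fun ω => (D ω, Z ω)) ⁻¹' ({0} ×ˢ {z}), f ω ∂μ := by
  have hset : (fun ω => (D ω, Z ω)) ⁻¹' ({0} ×ˢ {z}) = {ω | Z ω = z} ∩ D ⁻¹' {0} := by
    ext ω; simp [and_comm]
  rw [hset, ← setIntegral_indicator (hD (measurableSet_singleton 0))]
  congr with ω
  rcases hD01 ω with h | h <;> simp [h]

theorem setIntegral_mul_one_sub_eq_of_condIndepFun [StandardBorelSpace Ω] [IsFiniteMeasure μ]
    {hm : m ≤ mΩ} {Z : Ω → α} {D : Ω → ℝ} {W : Ω → β}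
    {H : β → ℝ} (hZ : Measurable Z) (hD : Measurable D) (hW : Measurable W) (hH : Measurable H)
    (hHW : Integrable (fun ω => H (W ω)) μ) (hD01 : ∀ ω, D ω = 0 ∨ D ω = 1)
    (hindep : Indep (MeasurableSpace.comap Z mα) m μ)
    (hci : CondIndepFun m hm W (fun ω => (D ω, Z ω)) μ) {z : α} (hz : μ {ω | Z ω = z} ≠ 0) :
    ∫ ω in {ω | Z ω = z}, H (W ω) * (1 - D ω) ∂μ
      = μ.real {ω | Z ω = z} * (∫ ω, H (W ω) ∂μ
        - ∫ ω, μ[fun ω => H (W ω)|m] ω * μ[|{ω | Z ω = z}][D|m] ω ∂μ) := by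
  set S := {ω | Z ω = z}
  set k := μ[fun ω => H (W ω)|m]
  have hS : MeasurableSet[MeasurableSpace.comap Z mα] S := ⟨{z}, measurableSet_singleton z, rfl⟩
  have hk : StronglyMeasurable[m] k := stronglyMeasurable_condExp
  have hD1 : ∀ ω, ‖D ω‖ ≤ 1 := fun ω => by rcases hD01 ω with h | h <;> simp [h]
  have h1D : ∀ ω, ‖1 - D ω‖ ≤ 1 := fun ω => by rcases hD01 ω with h | h <;> simp [h]
  have hDi : Integrable D μ := .of_bound hD.aestronglyMeasurable 1 (ae_of_all _ hD1)
  have hkD : Integrable (k * D) μ :=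
    integrable_condExp.mul_bdd hD.aestronglyMeasurable (ae_of_all _ hD1)
  have hVt : MeasurableSet (({0} : Set ℝ) ×ˢ ({z} : Set α)) :=
    (measurableSet_singleton 0).prod (measurableSet_singleton z)
  calc ∫ ω in S, H (W ω) * (1 - D ω) ∂μ = ∫ ω in S, k ω * (1 - D ω) ∂μ := by
        rw [setIntegral_mul_one_sub_eq_setIntegral_preimage hD hD01,
          setIntegral_mul_one_sub_eq_setIntegral_preimage hD hD01,
          hci.setIntegral_preimage_eq_setIntegral_condExp hW (hD.prodMk hZ) hH hHW hVt]
    _ = ∫ ω in S, k ω ∂μ - ∫ ω in S, k ω * D ω ∂μ := by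
        simp_rw [mul_one_sub]
        exact integral_sub integrable_condExp.integrableOn hkD.integrableOn
    _ = μ.real S * (∫ ω, H (W ω) ∂μ - ∫ ω, k ω * μ[|S][D|m] ω ∂μ) := by
        rw [setIntegral_eq_measureReal_mul_integral_of_indep hm hZ.comap_le hindep hS hk,
          integral_condExp hm,
          setIntegral_mul_eq_integral_mul_condExp_cond hm hZ.comap_le hindep hS hz hk hDi hkD,
          mul_sub]

end

/-- Core weighting identity (S1): under Z ⟂ U, W ⟂ (D,Z) | U and the
no-interaction condition E[D|Z=1,U] − E[D|Z=0,U] = δ ≠ 0 a.s., for any bounded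
measurable H one has E[H(W)·D·(2Z−1)/(f(Z)δ)] = E[H(W)]. -/
theorem weighting_identity_untreated
    {Ω : Type*} [MeasurableSpace Ω] [StandardBorelSpace Ω]
    (μ : Measure Ω) [IsProbabilityMeasure μ]
    (Z D U W : Ω → ℝ) (H : ℝ → ℝ) (δ : ℝ)
    (hZ : Measurable Z) (hD : Measurable D) (hU : Measurable U) (hW : Measurable W)
    (hHmeas : Measurable H) (hHbdd : ∃ C, ∀ x, |H x| ≤ C)
    (hZ01 : ∀ ω, Z ω = 0 ∨ Z ω = 1)
    (hD01 : ∀ ω, D ω = 0 ∨ D ω = 1)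
    (hZpos : 0 < μ {ω | Z ω = 1}) (hZlt : μ {ω | Z ω = 1} < 1)
    (hindep : IndepFun Z U μ)
    (hci : CondIndepFun (MeasurableSpace.comap U inferInstance) hU.comap_le
      W (fun ω => (D ω, Z ω)) μ)
    (hδ : δ ≠ 0)
    (hdiff : ∀ᵐ ω ∂μ,
      MeasureTheory.condExp (MeasurableSpace.comap U inferInstance)
        (ProbabilityTheory.cond μ {ω' | Z ω' = 1}) D ω
      - MeasureTheory.condExp (MeasurableSpace.comap U inferInstance)
        (ProbabilityTheory.cond μ {ω' | Z ω' = 0}) D ω = δ) :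
    ∫ ω, H (W ω) * (1 - D ω) * (2 * Z ω - 1) /
        ((μ {ω' | Z ω' = Z ω}).toReal * δ) ∂μ
      = - ∫ ω, H (W ω) ∂μ := by
  obtain ⟨C, hC⟩ := hHbdd
  have hHW : Integrable (fun ω => H (W ω)) μ :=
    .of_bound (hHmeas.comp hW).aestronglyMeasurable C (ae_of_all _ fun ω => hC (W ω))
  have hD1 : ∀ ω, ‖D ω‖ ≤ 1 := fun ω => by rcases hD01 ω with h | h <;> simp [h]
  have h1D : ∀ ω, ‖1 - D ω‖ ≤ 1 := fun ω => by rcases hD01 ω with h | h <;> simp [h]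
  have hkD : Integrable (μ[fun ω => H (W ω)|MeasurableSpace.comap U inferInstance] * D) μ :=
    integrable_condExp.mul_bdd hD.aestronglyMeasurable (ae_of_all _ hD1)
  have hind := (IndepFun_iff_Indep Z U μ).1 hindep
  have hμ1 : μ {ω | Z ω = 1} ≠ 0 := hZpos.ne'
  have hμ0 : μ {ω | Z ω = 0} ≠ 0 := by
    have : {ω | Z ω = 0} = {ω | Z ω = 1}ᶜ := by ext ω; rcases hZ01 ω with h | h <;> simp [h]
    rw [this, prob_compl_eq_one_sub (s := {ω | Z ω = 1}) (hZ (measurableSet_singleton 1))]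
    exact (tsub_pos_of_lt hZlt).ne'
  have hκ := integral_mul_condExp_cond_sub_eq_of_indep hU.comap_le hZ.comap_le hind
    (S₁ := {ω | Z ω = 1}) (S₀ := {ω | Z ω = 0}) ⟨{1}, measurableSet_singleton 1, rfl⟩
    ⟨{0}, measurableSet_singleton 0, rfl⟩ hμ1 hμ0
    stronglyMeasurable_condExp (.of_bound hD.aestronglyMeasurable 1 (ae_of_all _ hD1)) hkD hdiff
  rw [integral_condExp hU.comap_le] at hκ
  have hp : μ.real {ω | Z ω = 1} ≠ 0 := ENNReal.toReal_ne_zero.2 ⟨hμ1, measure_ne_top μ _⟩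
  have hq : μ.real {ω | Z ω = 0} ≠ 0 := ENNReal.toReal_ne_zero.2 ⟨hμ0, measure_ne_top μ _⟩
  rw [integral_mul_two_mul_sub_one_div_eq hZ hZ01 (f := fun ω => H (W ω) * (1 - D ω))
      (hHW.mul_bdd (measurable_const.sub hD).aestronglyMeasurable (ae_of_all _ h1D)) δ,
    setIntegral_mul_one_sub_eq_of_condIndepFun hZ hD hW hHmeas hHW hD01 hind hci hμ1,
    setIntegral_mul_one_sub_eq_of_condIndepFun hZ hD hW hHmeas hHW hD01 hind hci hμ0]
  field_simp
  linarith
end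

section
/- Let λ₀ : [0,∞) → (0,∞), s₁, s₀ : [0,∞) → (0,1] with s₁ s₀ > 0 on [0,T], ψ₀ ∈ ℝ, λ₁(y) = e^{ψ₀} λ₀(y), and h(1)h(0) < 0. Define G(ψ) = ∫₀^T [ h(1)λ₁(y)s₁(y) − ( h(1)λ₁(y)s₁(y) − h(0)λ₀(y)s₀(y) ) h(1) e^ψ s₁(y) / ( h(1)e^ψ s₁(y) − h(0)s₀(y) ) ] dy. Then G is strictly monotone in ψ (its derivative has constant nonzero sign), and hence ψ₀ is the unique solution of G(ψ) = 0. -/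
/-!
With `t = exp ψ`, `t₀ = exp ψ₀` and `r = -h0 s₀ / (h1 s₁) > 0`, multiplying the integrand by `h1`
turns it into `-h1 h0 λ₀ s₀ · (t₀ - t) / (t + r)`. The weight is positive and
`(t₀ - t) / (t + r) = (t₀ + r) / (t + r) - 1` is strictly decreasing in `t > 0`, so `ψ ↦ h1 G ψ`
is strictly decreasing; the integrand vanishes at `t = t₀`, so `ψ₀` is a root, hence the only one.
-/

open Real Set intervalIntegral

lemma strictAntiOn_sub_div_add {t₀ r : ℝ} (h : 0 < t₀ + r) :
    StrictAntiOn (fun t => (t₀ - t) / (t + r)) (Ioi (-r)) := by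
  intro a ha b hb hab
  simp only [mem_Ioi] at ha hb
  rw [div_lt_div_iff₀ (by linarith) (by linarith)]
  nlinarith

lemma intervalIntegral_strictAnti_of_forall_lt {f : ℝ → ℝ → ℝ} {a b : ℝ} (hab : a < b)
    (hf : ∀ ψ, ContinuousOn (f ψ) (Icc a b))
    (hlt : ∀ ψ ψ', ψ < ψ' → ∀ y ∈ Icc a b, f ψ' y < f ψ y) :
    StrictAnti fun ψ => ∫ y in a..b, f ψ y := fun ψ ψ' h =>
  integral_lt_integral_of_continuousOn_of_le_of_exists_lt hab (hf ψ') (hf ψ)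
    (fun y hy => (hlt ψ ψ' h y (Ioc_subset_Icc_self hy)).le)
    ⟨a, left_mem_Icc.2 hab.le, hlt ψ ψ' h a (left_mem_Icc.2 hab.le)⟩

lemma strictAnti_integral_mul_sub_exp_div_exp_add {K r : ℝ → ℝ} {a b t₀ : ℝ} (hab : a < b)
    (ht₀ : 0 < t₀) (hK : ∀ y ∈ Icc a b, 0 < K y) (hr : ∀ y ∈ Icc a b, 0 < r y)
    (hKc : ContinuousOn K (Icc a b)) (hrc : ContinuousOn r (Icc a b)) :
    StrictAnti fun ψ => ∫ y in a..b, K y * ((t₀ - exp ψ) / (exp ψ + r y)) := by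
  refine intervalIntegral_strictAnti_of_forall_lt hab (fun ψ => ?_) fun ψ ψ' h y hy => ?_
  · refine hKc.mul (continuousOn_const.div (continuousOn_const.add hrc) fun y hy => ?_)
    exact (add_pos (exp_pos ψ) (hr y hy)).ne'
  · have hmem : ∀ ψ, exp ψ ∈ Ioi (-r y) := fun ψ => by
      simpa using (neg_neg_of_pos (hr y hy)).trans (exp_pos ψ)
    refine mul_lt_mul_of_pos_left ?_ (hK y hy)
    exact strictAntiOn_sub_div_add (add_pos ht₀ (hr y hy)) (hmem ψ) (hmem ψ') (exp_lt_exp.2 h)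

lemma StrictAnti.strictMono_or_strictAnti_of_const_mul {f : ℝ → ℝ} {c : ℝ} (hc : c ≠ 0)
    (hf : StrictAnti fun x => c * f x) : StrictMono f ∨ StrictAnti f := by
  rcases hc.lt_or_gt with hc | hc
  · exact Or.inl fun a b hab => lt_of_mul_lt_mul_of_nonpos_left (hf hab) hc.le
  · exact Or.inr fun a b hab => lt_of_mul_lt_mul_left (hf hab) hc.le

lemma mul_integrand_eq_mul_sub_div_add {L s₁ s₀ h1 h0 t t₀ : ℝ} (hh1 : h1 ≠ 0) (hs₁ : s₁ ≠ 0)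
    (ht : t + -(h0 * s₀) / (h1 * s₁) ≠ 0) :
    h1 * (h1 * (t₀ * L) * s₁ -
        (h1 * (t₀ * L) * s₁ - h0 * L * s₀) * (h1 * t * s₁) / (h1 * t * s₁ - h0 * s₀)) =
      -(h1 * h0) * L * s₀ * ((t₀ - t) / (t + -(h0 * s₀) / (h1 * s₁))) := by
  have hd : t + -(h0 * s₀) / (h1 * s₁) = (h1 * t * s₁ - h0 * s₀) / (h1 * s₁) := by
    field_simp
    ring
  rw [hd] at ht ⊢
  have hd' : h1 * t * s₁ - h0 * s₀ ≠ 0 := by simpa [hh1, hs₁] using ht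
  rw [div_div_eq_mul_div, mul_div_assoc', sub_div' hd', mul_div_assoc']
  congr 1
  ring

theorem unique_root_of_population_estimating_equation_general
    (lam₀ s₁ s₀ : ℝ → ℝ) (T ψ₀ h1 h0 : ℝ) (hT : 0 < T)
    (hlam₀ : ∀ y ∈ Set.Icc 0 T, 0 < lam₀ y)
    (hs₁ : ∀ y ∈ Set.Icc 0 T, s₁ y ∈ Set.Ioc (0 : ℝ) 1)
    (hs₀ : ∀ y ∈ Set.Icc 0 T, s₀ y ∈ Set.Ioc (0 : ℝ) 1)
    (hcl : ContinuousOn lam₀ (Set.Icc 0 T))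
    (hcs₁ : ContinuousOn s₁ (Set.Icc 0 T))
    (hcs₀ : ContinuousOn s₀ (Set.Icc 0 T))
    (hh : h1 * h0 < 0)
    (lam₁ : ℝ → ℝ) (hph : ∀ y, lam₁ y = Real.exp ψ₀ * lam₀ y)
    (G : ℝ → ℝ)
    (hG : ∀ ψ, G ψ = ∫ y in (0:ℝ)..T,
      (h1 * lam₁ y * s₁ y -
        (h1 * lam₁ y * s₁ y - h0 * lam₀ y * s₀ y) * (h1 * Real.exp ψ * s₁ y) /
          (h1 * Real.exp ψ * s₁ y - h0 * s₀ y))) :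
    (StrictMono G ∨ StrictAnti G) ∧ ∀ ψ, G ψ = 0 ↔ ψ = ψ₀ := by
  have hh1 : h1 ≠ 0 := left_ne_zero_of_mul hh.ne
  set K := fun y => -(h1 * h0) * lam₀ y * s₀ y
  set r := fun y => -(h0 * s₀ y) / (h1 * s₁ y)
  have hr : ∀ y ∈ Icc 0 T, 0 < r y := fun y hy => by
    simp only [r]
    rw [← mul_div_mul_left _ _ hh1]
    exact div_pos (by nlinarith [(hs₀ y hy).1])
      (by nlinarith [mul_pos (mul_self_pos.2 hh1) (hs₁ y hy).1])
  have hGK : ∀ ψ, h1 * G ψ = ∫ y in (0 : ℝ)..T, K y * ((exp ψ₀ - exp ψ) / (exp ψ + r y)) := by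
    intro ψ
    rw [hG, ← integral_const_mul]
    refine integral_congr fun y hy => ?_
    rw [uIcc_of_le hT.le] at hy
    simp only [hph, K, r]
    exact mul_integrand_eq_mul_sub_div_add hh1 (hs₁ y hy).1.ne' (add_pos (exp_pos ψ) (hr y hy)).ne'
  have hanti : StrictAnti fun ψ => h1 * G ψ := by
    simp only [hGK]
    exact strictAnti_integral_mul_sub_exp_div_exp_add hT (exp_pos ψ₀)
      (fun y hy => mul_pos (mul_pos (neg_pos.2 hh) (hlam₀ y hy)) (hs₀ y hy).1) hr
      ((continuousOn_const.mul hcl).mul hcs₀)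
      ((continuousOn_const.mul hcs₀).neg.div (continuousOn_const.mul hcs₁) fun y hy =>
        mul_ne_zero hh1 (hs₁ y hy).1.ne')
  have hroot : G ψ₀ = 0 := by
    simpa [hh1] using hGK ψ₀
  exact ⟨hanti.strictMono_or_strictAnti_of_const_mul hh1,
    fun ψ => ⟨fun h => hanti.injective (by simp [h, hroot]), fun h => h ▸ hroot⟩⟩

/-- Uniqueness claim from the proof of Theorem 1: the population estimating
function G is strictly monotone in ψ and hence has the true value ψ₀ as its
unique root. -/
theorem unique_root_of_population_estimating_equation
    (lam₀ s₁ s₀ : ℝ → ℝ) (T ψ₀ h1 h0 : ℝ) (hT : 0 < T)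
    (hlam₀ : ∀ y ∈ Set.Icc 0 T, 0 < lam₀ y)
    (hs₁ : ∀ y ∈ Set.Icc 0 T, s₁ y ∈ Set.Ioc (0 : ℝ) 1)
    (hs₀ : ∀ y ∈ Set.Icc 0 T, s₀ y ∈ Set.Ioc (0 : ℝ) 1)
    (hprod : ∀ y ∈ Set.Icc 0 T, 0 < s₁ y * s₀ y)
    (hcl : ContinuousOn lam₀ (Set.Icc 0 T))
    (hcs₁ : ContinuousOn s₁ (Set.Icc 0 T))
    (hcs₀ : ContinuousOn s₀ (Set.Icc 0 T))
    (hh : h1 * h0 < 0)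
    (lam₁ : ℝ → ℝ) (hph : ∀ y, lam₁ y = Real.exp ψ₀ * lam₀ y)
    (G : ℝ → ℝ)
    (hG : ∀ ψ, G ψ = ∫ y in (0:ℝ)..T,
      (h1 * lam₁ y * s₁ y -
        (h1 * lam₁ y * s₁ y - h0 * lam₀ y * s₀ y) * (h1 * Real.exp ψ * s₁ y) /
          (h1 * Real.exp ψ * s₁ y - h0 * s₀ y))) :
    (StrictMono G ∨ StrictAnti G) ∧ ∀ ψ, G ψ = 0 ↔ ψ = ψ₀ :=
  unique_root_of_population_estimating_equation_general lam₀ s₁ s₀ T ψ₀ h1 h0 hT hlam₀ hs₁ hs₀ hcl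
    hcs₁ hcs₀ hh lam₁ hph G hG
end

section
/- Let λ₀, λ₁ : [0,∞) → [0,∞) with λ₁ = e^ψ λ₀, survival functions s₁, s₀ > 0, h(1)h(0) < 0, and bounded measurable g̃(d, y) for d ∈ {0,1}. Then pointwise in y: λ₁(y)s₁(y)g̃(1,y)h(1) − λ₀(y)s₀(y)g̃(0,y)h(0) − [ ( h(1)λ₁(y)s₁(y) − h(0)λ₀(y)s₀(y) ) ( s₁(y)e^ψ h(1) g̃(1,y) − s₀(y) h(0) g̃(0,y) ) ] / [ h(1)e^ψ s₁(y) − h(0)s₀(y) ] = 0. -/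
/-!
Under proportional hazards the first factor of the numerator is `λ₀(y)` times the
denominator, so the quotient collapses to `λ₀(y) (s₁ e^ψ h(1) g̃(1,y) − s₀ h(0) g̃(0,y))`,
which is exactly the first two terms. The denominator cannot vanish because
`h(1) e^ψ s₁` and `h(0) s₀` have opposite signs.
-/

open Real

theorem sub_ne_zero_of_mul_neg_of_pos {R : Type*} [CommRing R] [LinearOrder R]
    [IsStrictOrderedRing R] {a b u v : R} (hab : a * b < 0) (hu : 0 < u) (hv : 0 < v) :
    a * u - b * v ≠ 0 := by
  intro h
  have hprod : a * u * (b * v) < 0 := by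
    calc a * u * (b * v) = a * b * (u * v) := by ring
      _ < 0 := mul_neg_of_neg_of_pos hab (mul_pos hu hv)
  rw [← sub_eq_zero.mp h] at hprod
  exact (mul_self_nonneg (a * u)).not_gt hprod

theorem proportional_score_sub_projection_eq_zero {K : Type*} [Field K]
    {e a s₁ s₀ g₁ g₀ h₁ h₀ : K} (hD : h₁ * e * s₁ - h₀ * s₀ ≠ 0) :
    e * a * s₁ * g₁ * h₁ - a * s₀ * g₀ * h₀ -
        (h₁ * (e * a) * s₁ - h₀ * a * s₀) * (s₁ * e * h₁ * g₁ - s₀ * h₀ * g₀) /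
          (h₁ * e * s₁ - h₀ * s₀) = 0 := by
  rw [sub_eq_zero, eq_div_iff hD]
  ring

theorem pointwise_generalized_score_identity_general
    (lam₁ lam₀ s₁ s₀ : ℝ → ℝ) (gt : ℝ → ℝ → ℝ) (ψ h1 h0 : ℝ)
    (hs₁ : ∀ y, 0 < s₁ y) (hs₀ : ∀ y, 0 < s₀ y)
    (hph : ∀ y, lam₁ y = Real.exp ψ * lam₀ y)
    (hh : h1 * h0 < 0) :
    ∀ y, lam₁ y * s₁ y * gt 1 y * h1 - lam₀ y * s₀ y * gt 0 y * h0 -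
        (h1 * lam₁ y * s₁ y - h0 * lam₀ y * s₀ y) *
          (s₁ y * Real.exp ψ * h1 * gt 1 y - s₀ y * h0 * gt 0 y) /
          (h1 * Real.exp ψ * s₁ y - h0 * s₀ y) = 0 := by
  intro y
  have hD : h1 * Real.exp ψ * s₁ y - h0 * s₀ y ≠ 0 := by
    rw [mul_assoc]
    exact sub_ne_zero_of_mul_neg_of_pos hh (mul_pos (exp_pos ψ) (hs₁ y)) (hs₀ y)
  rw [hph y]
  exact proportional_score_sub_projection_eq_zero hD

/-- Pointwise identity proving Theorem 2: replacing D with an arbitrary bounded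
measurable g̃(D,y) keeps the weighted estimating function unbiased. -/
theorem pointwise_generalized_score_identity
    (lam₁ lam₀ s₁ s₀ : ℝ → ℝ) (gt : ℝ → ℝ → ℝ) (ψ h1 h0 : ℝ)
    (hlam₁ : ∀ y, 0 ≤ lam₁ y) (hlam₀ : ∀ y, 0 ≤ lam₀ y)
    (hs₁ : ∀ y, 0 < s₁ y) (hs₀ : ∀ y, 0 < s₀ y)
    (hgt : Measurable fun p : ℝ × ℝ => gt p.1 p.2)
    (hgtbdd : ∃ C, ∀ d y, |gt d y| ≤ C)
    (hph : ∀ y, lam₁ y = Real.exp ψ * lam₀ y)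
    (hh : h1 * h0 < 0) :
    ∀ y, lam₁ y * s₁ y * gt 1 y * h1 - lam₀ y * s₀ y * gt 0 y * h0 -
        (h1 * lam₁ y * s₁ y - h0 * lam₀ y * s₀ y) *
          (s₁ y * Real.exp ψ * h1 * gt 1 y - s₀ y * h0 * gt 0 y) /
          (h1 * Real.exp ψ * s₁ y - h0 * s₀ y) = 0 :=
  pointwise_generalized_score_identity_general lam₁ lam₀ s₁ s₀ gt ψ h1 h0 hs₁ hs₀ hph hh
end

section
/- Let p₁, p₀ ∈ (0,1) with risk difference δ = p₁ − p₀ and odds product OP = p₁p₀/((1−p₁)(1−p₀)). Then the map (p₁, p₀) ↦ (δ, OP) from {(p₁,p₀) ∈ (0,1)²} to {(δ, OP) : δ ∈ (−1,1), OP > 0, |δ| < 1} is injective: given any δ ∈ (−1,1) and OP > 0, there is at most one pair (p₁, p₀) ∈ (0,1)² with p₁ − p₀ = δ and p₁p₀/((1−p₁)(1−p₀)) = OP. -/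
/-- Variation independence parameterization: the map
(p₁, p₀) ↦ (risk difference, odds product) is injective on (0,1)². -/
theorem risk_difference_odds_product_injective
    (p₁ p₀ q₁ q₀ : ℝ)
    (hp₁ : p₁ ∈ Set.Ioo (0:ℝ) 1) (hp₀ : p₀ ∈ Set.Ioo (0:ℝ) 1)
    (hq₁ : q₁ ∈ Set.Ioo (0:ℝ) 1) (hq₀ : q₀ ∈ Set.Ioo (0:ℝ) 1)
    (hδ : p₁ - p₀ = q₁ - q₀)
    (hOP : p₁ * p₀ / ((1 - p₁) * (1 - p₀)) = q₁ * q₀ / ((1 - q₁) * (1 - q₀))) :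
    p₁ = q₁ ∧ p₀ = q₀ := by
  obtain ⟨hp₁0, hp₁1⟩ := hp₁
  obtain ⟨hp₀0, hp₀1⟩ := hp₀
  obtain ⟨hq₁0, hq₁1⟩ := hq₁
  obtain ⟨hq₀0, hq₀1⟩ := hq₀
  have hpd : (0:ℝ) < (1 - p₁) * (1 - p₀) := by nlinarith
  have hqd : (0:ℝ) < (1 - q₁) * (1 - q₀) := by nlinarith
  have hcross : p₁ * p₀ * ((1 - q₁) * (1 - q₀)) = q₁ * q₀ * ((1 - p₁) * (1 - p₀)) :=
    (div_eq_div_iff (ne_of_gt hpd) (ne_of_gt hqd)).mp hOP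
  have hkey : (p₀ - q₀) * (p₁ * (1 - q₁) + q₀ * (1 - p₀)) = 0 := by
    linear_combination hcross + (p₀ * q₀ - q₀) * hδ
  have hpos : 0 < p₁ * (1 - q₁) + q₀ * (1 - p₀) := by nlinarith
  have h0 : p₀ = q₀ := by
    have := mul_eq_zero.mp hkey
    rcases this with h | h
    · linarith
    · linarith
  exact ⟨by linarith, h0⟩
end

section
/- Let p₀ ∈ (0,1), δ ∈ (−1,1) with p₀ + δ ∈ (0,1). Define φ(p₀) = (p₀+δ)p₀ / ((1−p₀−δ)(1−p₀)). Then φ is strictly increasing on the interval {p₀ ∈ (0,1) : p₀ + δ ∈ (0,1)}, with φ → 0 at the left endpoint and φ → ∞ at the right endpoint; hence for every OP > 0 there exists a unique p₀ with φ(p₀) = OP. -/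
open Filter Topology

/-- Existence half of the (risk difference, odds product) parameterization:
φ(p₀) = (p₀+δ)p₀/((1−p₀−δ)(1−p₀)) is strictly increasing on the feasible
interval, tends to 0 and ∞ at its endpoints, and hits every OP > 0 exactly
once. -/
theorem odds_product_strict_mono_and_surjective
    (δ : ℝ) (hδ : δ ∈ Set.Ioo (-1 : ℝ) 1)
    (φ : ℝ → ℝ)
    (hφ : ∀ p₀, φ p₀ = (p₀ + δ) * p₀ / ((1 - p₀ - δ) * (1 - p₀))) :
    StrictMonoOn φ {p₀ : ℝ | p₀ ∈ Set.Ioo (0:ℝ) 1 ∧ p₀ + δ ∈ Set.Ioo (0:ℝ) 1} ∧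
    Tendsto φ (𝓝[>] (max 0 (-δ))) (𝓝 0) ∧
    Tendsto φ (𝓝[<] (min 1 (1 - δ))) atTop ∧
    ∀ OP : ℝ, 0 < OP →
      ∃! p₀ : ℝ, (p₀ ∈ Set.Ioo (0:ℝ) 1 ∧ p₀ + δ ∈ Set.Ioo (0:ℝ) 1) ∧ φ p₀ = OP := by
  obtain ⟨hδ1, hδ2⟩ := hδ
  set a := max 0 (-δ) with ha
  set b := min 1 (1 - δ) with hb
  have hφfun : φ = fun p => (p + δ) * p / ((1 - p - δ) * (1 - p)) := funext hφ
  have hset : {p₀ : ℝ | p₀ ∈ Set.Ioo (0:ℝ) 1 ∧ p₀ + δ ∈ Set.Ioo (0:ℝ) 1} = Set.Ioo a b := by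
    ext p
    simp only [Set.mem_setOf_eq, Set.mem_Ioo, ha, hb, max_lt_iff, lt_min_iff]
    constructor
    · rintro ⟨⟨h1, h2⟩, h3, h4⟩; exact ⟨⟨h1, by linarith⟩, h2, by linarith⟩
    · rintro ⟨⟨h1, h2⟩, h3, h4⟩; exact ⟨⟨h1, h3⟩, by linarith, by linarith⟩
  have hab : a < b := by
    rw [ha, hb, max_lt_iff, lt_min_iff, lt_min_iff]
    exact ⟨⟨by linarith, by linarith⟩, by linarith, by linarith⟩
  have hmem : ∀ p ∈ Set.Ioo a b, 0 < p ∧ 0 < p + δ ∧ 0 < 1 - p - δ ∧ 0 < 1 - p := by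
    intro p hp
    have h1 : 0 < p := lt_of_le_of_lt (le_max_left _ _) hp.1
    have h2 : -δ < p := lt_of_le_of_lt (le_max_right _ _) hp.1
    have h3 : p < 1 := lt_of_lt_of_le hp.2 (min_le_left _ _)
    have h4 : p < 1 - δ := lt_of_lt_of_le hp.2 (min_le_right _ _)
    exact ⟨h1, by linarith, by linarith, by linarith⟩
  have hmono : StrictMonoOn φ (Set.Ioo a b) := by
    intro x hx y hy hxy
    obtain ⟨hx1, hx2, hx3, hx4⟩ := hmem x hx
    obtain ⟨hy1, hy2, hy3, hy4⟩ := hmem y hy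
    rw [hφ, hφ, div_lt_div_iff₀ (by positivity) (by positivity)]
    nlinarith [mul_pos hx2 hx1, mul_pos hy2 hy1, mul_pos hx3 hx4, mul_pos hy3 hy4,
      mul_pos (mul_pos hx2 hx1) (sub_pos.mpr hxy), mul_pos hy3 (sub_pos.mpr hxy),
      mul_pos hx4 (sub_pos.mpr hxy)]
  have ha1 : a < 1 := lt_of_lt_of_le hab (min_le_left _ _)
  have ha2 : a < 1 - δ := lt_of_lt_of_le hab (min_le_right _ _)
  have hb1 : 0 < b := lt_of_le_of_lt (le_max_left _ _) hab
  have hb2 : -δ < b := lt_of_le_of_lt (le_max_right _ _) hab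
  have hDa : (0:ℝ) < (1 - a - δ) * (1 - a) := by nlinarith
  have hφa : φ a = 0 := by
    have hnum : (a + δ) * a = 0 := by
      rcases max_choice 0 (-δ) with h | h
      · rw [ha, h]; ring
      · rw [ha, h]; ring
    rw [hφ, hnum, zero_div]
  have h0 : Tendsto φ (𝓝[>] a) (𝓝 0) := by
    have hcont : ContinuousAt φ a := by
      rw [hφfun]
      exact ContinuousAt.div (by fun_prop) (by fun_prop) (ne_of_gt hDa)
    have := hcont.tendsto.mono_left (nhdsWithin_le_nhds (s := Set.Ioi a))
    rwa [hφa] at this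
  -- tendsto atTop at b
  have hNb : (0:ℝ) < (b + δ) * b := by nlinarith
  have hDb : (1 - b - δ) * (1 - b) = 0 := by
    rcases min_choice 1 (1 - δ) with h | h
    · rw [hb, h]; ring
    · rw [hb, h]; ring
  have hDtend : Tendsto (fun p => (1 - p - δ) * (1 - p)) (𝓝[<] b) (𝓝[>] 0) := by
    apply tendsto_nhdsWithin_of_tendsto_nhds_of_eventually_within
    · have : ContinuousAt (fun p => (1 - p - δ) * (1 - p)) b := by fun_prop
      have h := this.tendsto.mono_left (nhdsWithin_le_nhds (s := Set.Iio b))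
      rwa [hDb] at h
    · filter_upwards [Ioo_mem_nhdsLT_of_mem (Set.mem_Ioc.mpr ⟨hab, le_refl b⟩)] with p hp
      obtain ⟨_, _, h3, h4⟩ := hmem p hp
      exact mul_pos h3 h4
  have hinf : Tendsto φ (𝓝[<] b) atTop := by
    rw [hφfun]
    have hN : Tendsto (fun p => (p + δ) * p) (𝓝[<] b) (𝓝 ((b + δ) * b)) := by
      exact (Continuous.tendsto (by fun_prop) b).mono_left nhdsWithin_le_nhds
    have hinv : Tendsto (fun p => ((1 - p - δ) * (1 - p))⁻¹) (𝓝[<] b) atTop :=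
      tendsto_inv_nhdsGT_zero.comp hDtend
    have := hN.pos_mul_atTop hNb hinv
    simpa [div_eq_mul_inv] using this
  refine ⟨hset ▸ hmono, h0, hinf, ?_⟩
  intro OP hOP
  -- find x with φ x < OP
  have hx : ∃ x ∈ Set.Ioo a b, φ x < OP := by
    have h1 : ∀ᶠ p in 𝓝[>] a, φ p < OP := h0.eventually (Filter.Tendsto.eventually_lt_const hOP tendsto_id) |>.mono (fun p hp => hp)
    have h2 : Set.Ioo a b ∈ 𝓝[>] a := Ioo_mem_nhdsGT_of_mem (Set.mem_Ico.mpr ⟨le_refl a, hab⟩)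
    rcases (h1.and (Filter.eventually_mem_set.mpr h2)).exists with ⟨x, hx1, hx2⟩
    exact ⟨x, hx2, hx1⟩
  have hy : ∃ y ∈ Set.Ioo a b, OP < φ y := by
    have h1 : ∀ᶠ p in 𝓝[<] b, OP < φ p := hinf.eventually_gt_atTop OP
    have h2 : Set.Ioo a b ∈ 𝓝[<] b := Ioo_mem_nhdsLT_of_mem (Set.mem_Ioc.mpr ⟨hab, le_refl b⟩)
    rcases (h1.and (Filter.eventually_mem_set.mpr h2)).exists with ⟨y, hy1, hy2⟩
    exact ⟨y, hy2, hy1⟩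
  obtain ⟨x, hxmem, hxlt⟩ := hx
  obtain ⟨y, hymem, hylt⟩ := hy
  have hxy : x < y := by
    by_contra h
    push_neg at h
    rcases eq_or_lt_of_le h with h' | h'
    · rw [h'] at hylt; linarith
    · have := hmono hymem hxmem h'; linarith
  have hsub : Set.Icc x y ⊆ Set.Ioo a b := by
    intro p hp
    exact ⟨lt_of_lt_of_le hxmem.1 hp.1, lt_of_le_of_lt hp.2 hymem.2⟩
  have hcont : ContinuousOn φ (Set.Icc x y) := by
    rw [hφfun]
    apply ContinuousOn.div (by fun_prop) (by fun_prop)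
    intro p hp
    obtain ⟨_, _, h3, h4⟩ := hmem p (hsub hp)
    exact ne_of_gt (mul_pos h3 h4)
  have hIVT := intermediate_value_Icc (le_of_lt hxy) hcont
  have hOPmem : OP ∈ Set.Icc (φ x) (φ y) := ⟨le_of_lt hxlt, le_of_lt hylt⟩
  obtain ⟨p, hpIcc, hpval⟩ := hIVT hOPmem
  refine ⟨p, ⟨?_, hpval⟩, ?_⟩
  · have := hsub hpIcc
    rw [← hset] at this
    exact this
  · rintro q ⟨hqmem, hqval⟩
    have hq : q ∈ Set.Ioo a b := by
      have h' : q ∈ {p₀ : ℝ | p₀ ∈ Set.Ioo (0:ℝ) 1 ∧ p₀ + δ ∈ Set.Ioo (0:ℝ) 1} := hqmem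
      rwa [hset] at h'
    exact hmono.injOn hq (hsub hpIcc) (by rw [hqval, hpval])
end

section
/- Let s₁, s₀ : [0,T] → (0,1] with s₁s₀ > 0, λ₀ > 0 measurable, ψ ≠ ψ' real numbers, λ₁ = e^ψλ₀, and h(1) = 1, h(0) = −1. Define G(ψ') = ∫₀^T [ λ₁(y)s₁(y) − ( λ₁(y)s₁(y) + λ₀(y)s₀(y) ) e^{ψ'} s₁(y) / ( e^{ψ'}s₁(y) + s₀(y) ) ] dy. Then G(ψ') and G(ψ) = 0 satisfy: G(ψ') < 0 if ψ' > ψ and G(ψ') > 0 if ψ' < ψ (assuming ∫₀^T λ₀(y) s₀(y) s₁(y) dy > 0). -/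
open Real intervalIntegral

/-!
Substituting `λ₁ = e^ψ λ₀` and putting the integrand over its denominator shows that it is
`λ₀ s₀ s₁ / (e^{ψ'} s₁ + s₀) · (e^ψ - e^{ψ'})`. The first factor is continuous and positive on
`[0, T]`, so `G ψ'` is a positive constant times `e^ψ - e^{ψ'}`, whose sign is that of `ψ - ψ'`.
-/

lemma mul_sub_add_mul_div_eq (k q a u v : ℝ) (h : q * u + v ≠ 0) :
    k * a * u - (k * a * u + a * v) * (q * u) / (q * u + v) = a * v * u / (q * u + v) * (k - q) := by
  rw [div_mul_eq_mul_div, eq_div_iff h, sub_mul, div_mul_cancel₀ _ h]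
  ring

lemma intervalIntegral_pos_of_continuousOn {f : ℝ → ℝ} {a b : ℝ} (hab : a < b)
    (hf : ContinuousOn f (Set.Icc a b)) (hpos : ∀ y ∈ Set.Icc a b, 0 < f y) :
    0 < ∫ y in a..b, f y :=
  intervalIntegral_pos_of_pos_on (hf.intervalIntegrable_of_Icc hab.le)
    (fun y hy => hpos y (Set.Ioo_subset_Icc_self hy)) hab

theorem estimating_function_sign_general
    (lam₀ s₁ s₀ : ℝ → ℝ) (T ψ ψ' : ℝ) (hT : 0 < T)
    (hlam₀ : ∀ y ∈ Set.Icc 0 T, 0 < lam₀ y)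
    (hs₁ : ∀ y ∈ Set.Icc 0 T, s₁ y ∈ Set.Ioc (0 : ℝ) 1)
    (hs₀ : ∀ y ∈ Set.Icc 0 T, s₀ y ∈ Set.Ioc (0 : ℝ) 1)
    (hcl : ContinuousOn lam₀ (Set.Icc 0 T))
    (hcs₁ : ContinuousOn s₁ (Set.Icc 0 T))
    (hcs₀ : ContinuousOn s₀ (Set.Icc 0 T))
    (lam₁ : ℝ → ℝ) (hph : ∀ y, lam₁ y = Real.exp ψ * lam₀ y)
    (G : ℝ → ℝ)
    (hG : ∀ p, G p = ∫ y in (0:ℝ)..T,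
      (lam₁ y * s₁ y -
        (lam₁ y * s₁ y + lam₀ y * s₀ y) * (Real.exp p * s₁ y) /
          (Real.exp p * s₁ y + s₀ y))) :
    (ψ < ψ' → G ψ' < 0) ∧ (ψ' < ψ → 0 < G ψ') := by
  have hden : ∀ y ∈ Set.Icc 0 T, 0 < exp ψ' * s₁ y + s₀ y := fun y hy =>
    add_pos (mul_pos (exp_pos ψ') (hs₁ y hy).1) (hs₀ y hy).1
  set w : ℝ → ℝ := fun y => lam₀ y * s₀ y * s₁ y / (exp ψ' * s₁ y + s₀ y)
  have hw : 0 < ∫ y in (0:ℝ)..T, w y :=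
    intervalIntegral_pos_of_continuousOn hT
      (((hcl.mul hcs₀).mul hcs₁).div ((continuousOn_const.mul hcs₁).add hcs₀)
        fun y hy => (hden y hy).ne')
      fun y hy => div_pos (mul_pos (mul_pos (hlam₀ y hy) (hs₀ y hy).1) (hs₁ y hy).1) (hden y hy)
  have hGw : G ψ' = (∫ y in (0:ℝ)..T, w y) * (exp ψ - exp ψ') := by
    rw [hG, ← integral_mul_const]
    refine integral_congr fun y hy => ?_
    rw [Set.uIcc_of_le hT.le] at hy
    simp only [hph, w]
    exact mul_sub_add_mul_div_eq _ _ _ _ _ (hden y hy).ne'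
  rw [hGw]
  exact ⟨fun h => mul_neg_of_pos_of_neg hw (sub_neg.2 (exp_lt_exp.2 h)),
    fun h => mul_pos hw (sub_pos.2 (exp_lt_exp.2 h))⟩

/-- Sign property of the population estimating function with h(1)=1, h(0)=−1:
G(ψ') < 0 for ψ' > ψ and G(ψ') > 0 for ψ' < ψ. -/
theorem estimating_function_sign
    (lam₀ s₁ s₀ : ℝ → ℝ) (T ψ ψ' : ℝ) (hT : 0 < T)
    (hlam₀ : ∀ y ∈ Set.Icc 0 T, 0 < lam₀ y)
    (hs₁ : ∀ y ∈ Set.Icc 0 T, s₁ y ∈ Set.Ioc (0 : ℝ) 1)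
    (hs₀ : ∀ y ∈ Set.Icc 0 T, s₀ y ∈ Set.Ioc (0 : ℝ) 1)
    (hprod : ∀ y ∈ Set.Icc 0 T, 0 < s₁ y * s₀ y)
    (hcl : ContinuousOn lam₀ (Set.Icc 0 T))
    (hcs₁ : ContinuousOn s₁ (Set.Icc 0 T))
    (hcs₀ : ContinuousOn s₀ (Set.Icc 0 T))
    (hne : ψ ≠ ψ')
    (lam₁ : ℝ → ℝ) (hph : ∀ y, lam₁ y = Real.exp ψ * lam₀ y)
    (hpos : 0 < ∫ y in (0:ℝ)..T, lam₀ y * s₀ y * s₁ y)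
    (G : ℝ → ℝ)
    (hG : ∀ p, G p = ∫ y in (0:ℝ)..T,
      (lam₁ y * s₁ y -
        (lam₁ y * s₁ y + lam₀ y * s₀ y) * (Real.exp p * s₁ y) /
          (Real.exp p * s₁ y + s₀ y))) :
    (ψ < ψ' → G ψ' < 0) ∧ (ψ' < ψ → 0 < G ψ') :=
  estimating_function_sign_general lam₀ s₁ s₀ T ψ ψ' hT hlam₀ hs₁ hs₀ hcl hcs₁ hcs₀ lam₁ hph G hG
end
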